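/- Let q : ℝ^{D₁} × ⋯ × ℝ^{D_n} → ℝ be differentiable with block-coordinate Lipschitz gradient: for each i and all Λ and block perturbations δᵢ ∈ ℝ^{Dᵢ}, ‖∇_i q(Λ + Uᵢδᵢ) - ∇_i q(Λ)‖ ≤ Lᵢ‖δᵢ‖, where Uᵢ embeds the i-th block. Then for any Λ and any full perturbation δ = (δ₁,…,δ_n), q(Λ + δ) ≥ q(Λ) + ⟨∇q(Λ), δ⟩ - (n/2) Σᵢ Lᵢ ‖δᵢ‖², assuming q is concave. -/

import Mathlib

/-!
Along the segment `t ↦ Λ + t • Uᵢ δᵢ` the block Lipschitz bound gives the one-dimensional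
descent inequality `q (Λ + Uᵢ δᵢ) ≥ q Λ + ⟪∇ᵢ q Λ, δᵢ⟫ - Lᵢ / 2 * ‖δᵢ‖ ^ 2`. Since `Λ + δ` is the
average of the `n` points `Λ + n • Uᵢ δᵢ`, concavity bounds `q (Λ + δ)` below by the average of
their values, and the descent inequality applied to `n • δᵢ` bounds each of those; the rescaling
by `n` is where the factor `n` comes from.
-/

open scoped RealInnerProductSpace

open Finset

theorem le_apply_add_of_inner_gradient_sub_ge {E : Type*} [NormedAddCommGroup E]
    [InnerProductSpace ℝ E] [CompleteSpace E] {f : E → ℝ} (hf : Differentiable ℝ f) (x v : E)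
    {M : ℝ}
    (hM : ∀ t ∈ Set.Ioo (0 : ℝ) 1, -(M * t) ≤ ⟪gradient f (x + t • v) - gradient f x, v⟫) :
    f x + ⟪gradient f x, v⟫ - M / 2 ≤ f (x + v) := by
  set φ : ℝ → ℝ := fun t => f (x + t • v) - t * ⟪gradient f x, v⟫ + M / 2 * t ^ 2
  have hφ : ∀ t, HasDerivAt φ (⟪gradient f (x + t • v) - gradient f x, v⟫ + M * t) t := by
    intro t
    have hline : HasDerivAt (fun t : ℝ => x + t • v) v t := by
      simpa using ((hasDerivAt_id t).smul_const v).const_add x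
    have hf' := (hf (x + t • v)).hasGradientAt.hasFDerivAt.comp_hasDerivAt t hline
    rw [InnerProductSpace.toDual_apply_apply] at hf'
    refine ((hf'.sub ((hasDerivAt_id t).mul_const _)).add
      ((hasDerivAt_pow 2 t).const_mul (M / 2))).congr_deriv ?_
    simp only [inner_sub_left, Nat.cast_ofNat]
    ring
  have hmono : MonotoneOn φ (Set.Icc 0 1) := by
    refine monotoneOn_of_deriv_nonneg (convex_Icc 0 1)
      (fun t _ => (hφ t).continuousAt.continuousWithinAt)
      (fun t _ => (hφ t).differentiableAt.differentiableWithinAt) fun t ht => ?_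
    rw [interior_Icc] at ht
    rw [(hφ t).deriv]
    linarith [hM t ht]
  have := hmono (by norm_num) (by norm_num) zero_le_one
  simp only [φ, zero_smul, one_smul, add_zero] at this
  linarith

namespace PiLp

variable {ι : Type*} [DecidableEq ι] {β : ι → Type*}

theorem single_smul {𝕜 : Type*} [Semiring 𝕜] [∀ i, AddCommMonoid (β i)] [∀ i, Module 𝕜 (β i)]
    (p : ENNReal) (i : ι) (c : 𝕜) (a : β i) : single p i (c • a) = c • single p i a := by
  simp_rw [← toLp_single, Pi.single_smul, ← WithLp.toLp_smul]

theorem sum_single [Fintype ι] [∀ i, AddCommGroup (β i)] (p : ENNReal) (x : PiLp p β) :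
    ∑ i, single p i (x i) = x := by
  simp_rw [← toLp_single, ← WithLp.toLp_sum, Finset.univ_sum_single]

theorem inner_single_right [Fintype ι] [∀ i, NormedAddCommGroup (β i)]
    [∀ i, InnerProductSpace ℝ (β i)]
    (x : PiLp 2 β) (i : ι) (a : β i) : ⟪x, single 2 i a⟫ = ⟪x i, a⟫ := by
  rw [inner_apply, Finset.sum_eq_single i (fun j _ hj => by simp [hj]) (by simp), single_eq_same]

end PiLp

theorem le_apply_add_single_of_gradient_block_lipschitz {ι : Type*} [Fintype ι] [DecidableEq ι]
    {β : ι → Type*} [∀ i, NormedAddCommGroup (β i)] [∀ i, InnerProductSpace ℝ (β i)]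
    [∀ i, CompleteSpace (β i)] {f : PiLp 2 β → ℝ} (hf : Differentiable ℝ f) (x : PiLp 2 β)
    (i : ι) {L : ℝ}
    (hL : ∀ a : β i, ‖gradient f (x + PiLp.single 2 i a) i - gradient f x i‖ ≤ L * ‖a‖)
    (a : β i) : f x + ⟪gradient f x i, a⟫ - L / 2 * ‖a‖ ^ 2 ≤ f (x + PiLp.single 2 i a) := by
  have hdescent := le_apply_add_of_inner_gradient_sub_ge hf x (PiLp.single 2 i a)
    (M := L * ‖a‖ ^ 2) fun t ht => by
      have hgap := hL (t • a)
      rw [PiLp.single_smul, norm_smul, Real.norm_of_nonneg ht.1.le] at hgap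
      rw [PiLp.inner_single_right, PiLp.sub_apply]
      calc -(L * ‖a‖ ^ 2 * t) = -(L * (t * ‖a‖) * ‖a‖) := by ring
        _ ≤ -(‖gradient f (x + t • PiLp.single 2 i a) i - gradient f x i‖ * ‖a‖) := by
          gcongr
        _ ≤ _ := neg_le_of_abs_le (abs_real_inner_le_norm _ _)
  rw [PiLp.inner_single_right] at hdescent
  linarith

theorem ConcaveOn.sum_div_card_le_apply_add_sum {E : Type*} [AddCommGroup E] [Module ℝ E]
    {ι : Type*} [Fintype ι] [Nonempty ι] {f : E → ℝ} (hf : ConcaveOn ℝ Set.univ f) (x : E)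
    (v : ι → E) :
    (∑ i, f (x + (Fintype.card ι : ℝ) • v i)) / Fintype.card ι ≤ f (x + ∑ i, v i) := by
  have hn : (Fintype.card ι : ℝ) ≠ 0 := by positivity
  have hjensen := hf.le_map_sum (t := univ) (w := fun _ => (Fintype.card ι : ℝ)⁻¹)
    (p := fun i => x + (Fintype.card ι : ℝ) • v i) (fun _ _ => by positivity)
    (by simp [hn]) fun _ _ => Set.mem_univ _
  have hmean :
      ∑ i, (Fintype.card ι : ℝ)⁻¹ • (x + (Fintype.card ι : ℝ) • v i) = x + ∑ i, v i := by
    simp only [smul_add, smul_smul, inv_mul_cancel₀ hn, one_smul, sum_add_distrib, sum_const,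
      card_univ, ← Nat.cast_smul_eq_nsmul ℝ, mul_inv_cancel₀ hn]
  rwa [hmean, ← smul_sum, smul_eq_mul, inv_mul_eq_div] at hjensen

theorem stmt8_general (n : ℕ) (D : Fin n → ℕ)
    (q : PiLp 2 (fun i : Fin n => EuclideanSpace ℝ (Fin (D i))) → ℝ)
    (L : Fin n → ℝ)
    (hconc : ConcaveOn ℝ Set.univ q) (hdiff : Differentiable ℝ q)
    (hblock : ∀ (i : Fin n) (Λ : PiLp 2 (fun i : Fin n => EuclideanSpace ℝ (Fin (D i))))
        (δi : EuclideanSpace ℝ (Fin (D i))),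
      ‖gradient q (Λ + (WithLp.equiv 2 ((j : Fin n) → EuclideanSpace ℝ (Fin (D j)))).symm
          (Pi.single i δi)) i - gradient q Λ i‖ ≤ L i * ‖δi‖) :
    ∀ Λ δ : PiLp 2 (fun i : Fin n => EuclideanSpace ℝ (Fin (D i))),
      q (Λ + δ) ≥ q Λ + ⟪gradient q Λ, δ⟫ - (n / 2 : ℝ) * ∑ i, L i * ‖δ i‖ ^ 2 := by
  intro Λ δ
  rcases n.eq_zero_or_pos with rfl | hn
  · simp [Subsingleton.elim δ 0]
  have : Nonempty (Fin n) := Fin.pos_iff_nonempty.mp hn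
  have hn' : (n : ℝ) ≠ 0 := by positivity
  calc q Λ + ⟪gradient q Λ, δ⟫ - (n / 2 : ℝ) * ∑ i, L i * ‖δ i‖ ^ 2
      = ∑ i, (q Λ / n + ⟪gradient q Λ i, δ i⟫ - n / 2 * (L i * ‖δ i‖ ^ 2)) := by
        rw [PiLp.inner_apply, mul_sum, sum_sub_distrib, sum_add_distrib, sum_const, card_univ,
          Fintype.card_fin, nsmul_eq_mul, mul_div_cancel₀ _ hn']
    _ = (∑ i, (q Λ + ⟪gradient q Λ i, (n : ℝ) • δ i⟫ - L i / 2 * ‖(n : ℝ) • δ i‖ ^ 2)) / n := by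
        rw [sum_div]
        refine sum_congr rfl fun i _ => ?_
        rw [real_inner_smul_right, norm_smul, Real.norm_natCast]
        field_simp
    _ ≤ (∑ i, q (Λ + (n : ℝ) • PiLp.single 2 i (δ i))) / n := by
        gcongr with i
        rw [← PiLp.single_smul]
        exact le_apply_add_single_of_gradient_block_lipschitz hdiff Λ i (hblock i Λ) _
    _ ≤ q (Λ + δ) := by
        simpa only [Fintype.card_fin, PiLp.sum_single] using
          hconc.sum_div_card_le_apply_add_sum Λ fun i => PiLp.single 2 i (δ i)

theorem stmt8 (n : ℕ) (D : Fin n → ℕ)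
    (q : PiLp 2 (fun i : Fin n => EuclideanSpace ℝ (Fin (D i))) → ℝ)
    (L : Fin n → ℝ) (hL : ∀ i, 0 < L i)
    (hconc : ConcaveOn ℝ Set.univ q) (hdiff : Differentiable ℝ q)
    (hblock : ∀ (i : Fin n) (Λ : PiLp 2 (fun i : Fin n => EuclideanSpace ℝ (Fin (D i))))
        (δi : EuclideanSpace ℝ (Fin (D i))),
      ‖gradient q (Λ + (WithLp.equiv 2 ((j : Fin n) → EuclideanSpace ℝ (Fin (D j)))).symm
          (Pi.single i δi)) i - gradient q Λ i‖ ≤ L i * ‖δi‖) :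
    ∀ Λ δ : PiLp 2 (fun i : Fin n => EuclideanSpace ℝ (Fin (D i))),
      q (Λ + δ) ≥ q Λ + ⟪gradient q Λ, δ⟫ - (n / 2 : ℝ) * ∑ i, L i * ‖δ i‖ ^ 2 :=
  stmt8_general n D q L hconc hdiff hblock
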